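/- Let R be a commutative ring and let B and B' be semidualizing R-modules such that Tor_i^R(B, B') = 0 for all i ≥ 1. Then for every projective R-module P, every injective R-module I, and every i ≥ 1, one has Ext^i_R(P ⊗_R B, Hom_R(B', I)) = 0. -/

import Mathlib

/-!
Since `I` is injective, the adjunction `Hom(-, Hom(B', I)) ≅ Hom(- ⊗ B', I)` reduces the claim
to `Tor_i(P ⊗ B, B') = 0` computed from a projective resolution `Q` of `P ⊗ B`: a cocycle
`Q_{n+1} → Hom(B', I)` factors through the syzygy `Ω ⊆ Q_n` and extends to `Q_n` as soon as
`Ω ⊗ B' → Q_n ⊗ B'` is injective. The hypothesis gives `Tor_i(B, B') = 0` computed from a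
resolution of `B'`, and tensoring with the flat module `P` preserves this. A diagram chase
balancing the two computations of `Tor₁`, combined with dimension shifting along the syzygies
of `P ⊗ B`, carries the vanishing over to the resolution `Q`.
-/

open CategoryTheory CategoryTheory.Limits Opposite

universe u

variable (R : Type u) [CommRing R]

/-- An `R`-module `C` is *semidualizing* if it admits a (possibly unbounded) resolution
by finite rank free `R`-modules, the homothety map `R → Hom_R(C, C)` is an isomorphism,
and `Ext^i_R(C, C) = 0` for all `i ≥ 1`. -/
def IsSemidualizing (C : Type u) [AddCommGroup C] [Module R C] : Prop :=
  (∃ (P : ChainComplex (ModuleCat.{u} R) ℕ) (π : P.X 0 ⟶ ModuleCat.of R C)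
      (w : P.d 1 0 ≫ π = 0),
      (∀ j, Module.Finite R (P.X j) ∧ Module.Free R (P.X j)) ∧
      (∀ j, (P.augment π w).ExactAt j)) ∧
  Function.Bijective (fun r : R => r • (LinearMap.id : C →ₗ[R] C)) ∧
  (∀ i : ℕ, 1 ≤ i →
    IsZero (((Ext R (ModuleCat.{u} R) i).obj (op (ModuleCat.of R C))).obj
      (ModuleCat.of R C)))

open LinearMap TensorProduct

section

variable {R}

section TensorChase

variable {K G X N F Y : Type*}
  [AddCommGroup K] [Module R K] [AddCommGroup G] [Module R G] [AddCommGroup X] [Module R X]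
  [AddCommGroup N] [Module R N] [AddCommGroup F] [Module R F] [AddCommGroup Y] [Module R Y]

theorem lTensor_rTensor_comm_apply (k : K →ₗ[R] G) (n : N →ₗ[R] F) (z : K ⊗[R] N) :
    lTensor G n (rTensor N k z) = rTensor F k (lTensor K n z) := by
  rw [← LinearMap.comp_apply, lTensor_comp_rTensor, ← rTensor_comp_lTensor,
    LinearMap.comp_apply]

theorem lTensor_injective_of_rTensor_injective [Module.Flat R G]
    (k : K →ₗ[R] G) {n : N →ₗ[R] F} (hn : Function.Injective n)
    (h : Function.Injective (rTensor N k)) : Function.Injective (lTensor K n) := by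
  have hG : Function.Injective (lTensor G n) :=
    Module.Flat.lTensor_preserves_injective_linearMap n hn
  intro a b hab
  apply h; apply hG
  rw [lTensor_rTensor_comm_apply, lTensor_rTensor_comm_apply, hab]

/-- Balancing `Tor₁(X, Y)`: its vanishing computed from the presentation `N → F → Y → 0`
gives its vanishing computed from the presentation `0 → K → G → X → 0`. -/
theorem rTensor_injective_of_lTensor_injective [Module.Flat R F]
    {k : K →ₗ[R] G} {g : G →ₗ[R] X} {n : N →ₗ[R] F} {f : F →ₗ[R] Y}
    (hk : Function.Injective k) (hkg : Function.Exact k g) (hg : Function.Surjective g)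
    (hnf : Function.Exact n f) (hf : Function.Surjective f)
    (h : Function.Injective (lTensor X n)) : Function.Injective (rTensor Y k) := by
  rw [injective_iff_map_eq_zero]
  intro t ht
  obtain ⟨u, rfl⟩ := lTensor_surjective K hf t
  have hv : lTensor G f (rTensor F k u) = 0 := by
    rw [lTensor_rTensor_comm_apply, ht]
  obtain ⟨w, hw⟩ := (lTensor_exact G hnf hf _).mp hv
  have hx : rTensor N g w = 0 := by
    apply h
    rw [lTensor_rTensor_comm_apply, hw, ← LinearMap.comp_apply, ← rTensor_comp,
      hkg.linearMap_comp_eq_zero, rTensor_zero, LinearMap.zero_apply, map_zero]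
  obtain ⟨s, rfl⟩ := (rTensor_exact N hkg hg _).mp hx
  have hu : lTensor K n s = u :=
    Module.Flat.rTensor_preserves_injective_linearMap k hk
      (by rw [← lTensor_rTensor_comm_apply, hw])
  rw [← hu, ← LinearMap.comp_apply, ← lTensor_comp, hnf.linearMap_comp_eq_zero, lTensor_zero,
    LinearMap.zero_apply]

theorem lTensor_tensorProduct_injective [Module.Flat R K] {f : N →ₗ[R] F}
    (h : Function.Injective (lTensor X f)) : Function.Injective (lTensor (K ⊗[R] X) f) := by
  rw [lTensor_tensor, coe_comp, coe_comp]
  exact (TensorProduct.assoc R K X F).symm.injective.comp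
    ((Module.Flat.lTensor_preserves_injective_linearMap _ h).comp
      (TensorProduct.assoc R K X N).injective)

theorem Function.Exact.exists_comp_eq {f : K →ₗ[R] G} {g : G →ₗ[R] X}
    (hfg : Function.Exact f g) (hg : Function.Surjective g) {φ : G →ₗ[R] Y}
    (hφ : φ ∘ₗ f = 0) :
    ∃ ψ : X →ₗ[R] Y, ψ ∘ₗ g = φ := by
  refine ⟨(range f).liftQ φ (range_le_ker_iff.mpr hφ) ∘ₗ
    (hfg.linearEquivOfSurjective hg).symm.toLinearMap, ?_⟩
  ext x
  simp

end TensorChase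

theorem exists_extension_of_rTensor_injective {K G N I : Type u}
    [AddCommGroup K] [Module R K] [AddCommGroup G] [Module R G]
    [AddCommGroup N] [Module R N] [AddCommGroup I] [Module R I] [Module.Injective R I]
    {k : K →ₗ[R] G} (h : Function.Injective (rTensor N k)) (ψ : K →ₗ[R] N →ₗ[R] I) :
    ∃ Ψ : G →ₗ[R] N →ₗ[R] I, Ψ ∘ₗ k = ψ := by
  obtain ⟨T, hT⟩ := Module.Injective.out (rTensor N k) h (lift ψ)
  exact ⟨curry T, by ext x y; simpa using hT (x ⊗ₜ y)⟩

namespace CategoryTheory.ProjectiveResolution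

variable {M : ModuleCat.{u} R} (Q : ProjectiveResolution M)
  {N : ModuleCat.{u} R} (Q' : ProjectiveResolution N)

/-- The `(n + 1)`-st syzygy of `M`, realised inside `Q_n` as the image of `Q_{n+1}`. -/
abbrev syzygy (n : ℕ) : Submodule R (Q.complex.X n) := range (Q.complex.d (n + 1) n).hom

lemma surjective_π_f_zero : Function.Surjective (Q.π.f 0).hom :=
  (ModuleCat.epi_iff_surjective _).mp inferInstance

lemma exact_syzygy_zero : Function.Exact (Q.syzygy 0).subtype (Q.π.f 0).hom := by
  refine exact_of_comp_eq_zero_of_ker_le_range ?_ fun x hx => ?_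
  · ext ⟨_, y, rfl⟩
    exact congr($(Q.complex_d_comp_π_f_zero).hom y)
  · obtain ⟨y, rfl⟩ := (ShortComplex.moduleCat_exact_iff _).mp Q.exact₀ x hx
    exact ⟨⟨_, y, rfl⟩, rfl⟩

lemma rangeRestrict_d_comp_d (n : ℕ) :
    (Q.complex.d (n + 1) n).hom.rangeRestrict ∘ₗ (Q.complex.d (n + 2) (n + 1)).hom = 0 := by
  ext y
  exact congr($(Q.complex.d_comp_d (n + 2) (n + 1) n).hom y)

lemma exact_syzygy_succ (n : ℕ) :
    Function.Exact (Q.syzygy (n + 1)).subtype (Q.complex.d (n + 1) n).hom.rangeRestrict := by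
  refine exact_of_comp_eq_zero_of_ker_le_range ?_ fun x hx => ?_
  · ext ⟨_, y, rfl⟩ : 1
    exact congr($(Q.rangeRestrict_d_comp_d n) y)
  · rw [ker_rangeRestrict] at hx
    obtain ⟨y, rfl⟩ := (ShortComplex.moduleCat_exact_iff _).mp (Q.exact_succ n) x hx
    exact ⟨⟨_, y, rfl⟩, rfl⟩

/-- `Tor_i(X, N) = 0` for all `i ≥ 1`, computed from `Q'`: `Tor_{m+1}(X, N)` is the kernel of
`X ⊗ Ω^{m+1} → X ⊗ Q'_m`. -/
def TorIndependent (X : Type*) [AddCommGroup X] [Module R X] : Prop :=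
  ∀ m, Function.Injective (lTensor X (Q'.syzygy m).subtype)

theorem torIndependent_of_isZero_Tor {X : ModuleCat.{u} R}
    (h : ∀ i : ℕ, 1 ≤ i → IsZero (((Tor (ModuleCat.{u} R) i).obj X).obj N)) :
    Q'.TorIndependent X := by
  intro m
  have hexact : ∀ y : X ⊗[R] Q'.complex.X (m + 1),
      lTensor X (Q'.complex.d (m + 1) m).hom y = 0 →
      ∃ z : X ⊗[R] Q'.complex.X (m + 2),
        lTensor X (Q'.complex.d (m + 2) (m + 1)).hom z = y := by
    have := (HomologicalComplex.exactAt_iff_isZero_homology _ _).mpr <|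
      (h (m + 1) (by omega)).of_iso
        (Q'.isoLeftDerivedObj ((MonoidalCategory.tensoringLeft _).obj X) (m + 1)).symm
    rw [HomologicalComplex.exactAt_iff' _ (m + 2) (m + 1) m (by simp) (by simp),
      ShortComplex.moduleCat_exact_iff] at this
    exact this
  rw [injective_iff_map_eq_zero]
  intro t ht
  obtain ⟨y, rfl⟩ :=
    lTensor_surjective X (Q'.complex.d (m + 1) m).hom.surjective_rangeRestrict t
  obtain ⟨z, rfl⟩ := hexact y (by rwa [← LinearMap.comp_apply, ← lTensor_comp] at ht)
  rw [← LinearMap.comp_apply, ← lTensor_comp, rangeRestrict_d_comp_d,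
    lTensor_zero, LinearMap.zero_apply]

variable {Q'}

theorem TorIndependent.tensorProduct {X : Type*} [AddCommGroup X] [Module R X]
    (h : Q'.TorIndependent X) (P : Type*) [AddCommGroup P] [Module R P] [Module.Flat R P] :
    Q'.TorIndependent (P ⊗[R] X) :=
  fun m => lTensor_tensorProduct_injective (h m)

section ShortExact

variable {K G X : Type*} [AddCommGroup K] [Module R K] [AddCommGroup G] [Module R G]
  [AddCommGroup X] [Module R X] {k : K →ₗ[R] G} {g : G →ₗ[R] X}

theorem TorIndependent.rTensor_injective (hX : Q'.TorIndependent X)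
    (hk : Function.Injective k) (hkg : Function.Exact k g) (hg : Function.Surjective g) :
    Function.Injective (rTensor N k) :=
  rTensor_injective_of_lTensor_injective hk hkg hg Q'.exact_syzygy_zero Q'.surjective_π_f_zero
    (hX 0)

theorem TorIndependent.rTensor_syzygy_injective (hX : Q'.TorIndependent X)
    (hk : Function.Injective k) (hkg : Function.Exact k g) (hg : Function.Surjective g) (m : ℕ) :
    Function.Injective (rTensor (Q'.syzygy m) k) :=
  rTensor_injective_of_lTensor_injective hk hkg hg (Q'.exact_syzygy_succ m)
    (Q'.complex.d (m + 1) m).hom.surjective_rangeRestrict (hX (m + 1))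

theorem TorIndependent.of_exact [Module.Flat R G] (hX : Q'.TorIndependent X)
    (hk : Function.Injective k) (hkg : Function.Exact k g) (hg : Function.Surjective g) :
    Q'.TorIndependent K := fun m =>
  lTensor_injective_of_rTensor_injective k (Q'.syzygy m).injective_subtype
    (hX.rTensor_syzygy_injective hk hkg hg m)

end ShortExact

/-- The cokernel `X` is `M` for `n = 0` and `Ω^n` otherwise. -/
theorem exists_exact_torIndependent (hM : Q'.TorIndependent M) (n : ℕ) :
    ∃ (X : ModuleCat.{u} R) (g : Q.complex.X n →ₗ[R] X), Q'.TorIndependent X ∧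
      Function.Exact (Q.syzygy n).subtype g ∧ Function.Surjective g := by
  induction n with
  | zero => exact ⟨M, _, hM, Q.exact_syzygy_zero, Q.surjective_π_f_zero⟩
  | succ n ih =>
    obtain ⟨X, g, hX, hkg, hg⟩ := ih
    exact ⟨ModuleCat.of R (Q.syzygy n), _,
      hX.of_exact (Q.syzygy n).injective_subtype hkg hg,
      Q.exact_syzygy_succ n, (Q.complex.d (n + 1) n).hom.surjective_rangeRestrict⟩

theorem rTensor_syzygy_subtype_injective (hM : Q'.TorIndependent M) (n : ℕ) :
    Function.Injective (rTensor N (Q.syzygy n).subtype) := by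
  obtain ⟨X, g, hX, hkg, hg⟩ := Q.exists_exact_torIndependent hM n
  exact hX.rTensor_injective (Q.syzygy n).injective_subtype hkg hg

theorem isZero_Ext_succ_of_rTensor_syzygy_injective {L I : Type u} [AddCommGroup L] [Module R L]
    [AddCommGroup I] [Module R I] [Module.Injective R I] {n : ℕ}
    (h : Function.Injective (rTensor L (Q.syzygy n).subtype)) :
    IsZero (((Ext R (ModuleCat.{u} R) (n + 1)).obj (op M)).obj
      (ModuleCat.of R (L →ₗ[R] I))) := by
  refine IsZero.of_iso ?_ (Q.isoExt (n + 1) _)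
  rw [← HomologicalComplex.exactAt_iff_isZero_homology,
    HomologicalComplex.exactAt_iff' _ n (n + 1) (n + 2) (by simp) (by simp),
    ShortComplex.moduleCat_exact_iff]
  intro (φ : Q.complex.X (n + 1) ⟶ ModuleCat.of R (L →ₗ[R] I))
    (hφ : Q.complex.d _ _ ≫ φ = 0)
  obtain ⟨ψ, hψ⟩ := (Q.exact_syzygy_succ n).exists_comp_eq
    (Q.complex.d (n + 1) n).hom.surjective_rangeRestrict (φ := φ.hom) (by
      ext ⟨_, y, rfl⟩ : 1
      exact congr($hφ y))
  obtain ⟨Ψ, hΨ⟩ := exists_extension_of_rTensor_injective h ψ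
  refine ⟨ModuleCat.ofHom Ψ, ModuleCat.hom_ext ?_⟩
  change Ψ ∘ₗ ((Q.syzygy n).subtype ∘ₗ (Q.complex.d (n + 1) n).hom.rangeRestrict) = φ.hom
  rw [← LinearMap.comp_assoc, hΨ, hψ]

end CategoryTheory.ProjectiveResolution

end

theorem stmt18 (B B' : Type u)
    [AddCommGroup B] [Module R B] [AddCommGroup B'] [Module R B']
    (htor : ∀ i : ℕ, 1 ≤ i →
      IsZero (((Tor (ModuleCat.{u} R) i).obj (ModuleCat.of R B)).obj
        (ModuleCat.of R B'))) :
    ∀ (P : Type u) [AddCommGroup P] [Module R P] [Module.Projective R P]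
      (I : Type u) [AddCommGroup I] [Module R I] [Module.Injective R I]
      (i : ℕ), 1 ≤ i →
      IsZero (((Ext R (ModuleCat.{u} R) i).obj
        (op (ModuleCat.of R (TensorProduct R P B)))).obj
        (ModuleCat.of R (B' →ₗ[R] I))) := by
  intro P _ _ _ I _ _ _ i hi
  obtain ⟨n, rfl⟩ := Nat.exists_eq_add_of_le' hi
  let Q' := projectiveResolution (ModuleCat.of R B')
  have hPB : Q'.TorIndependent (P ⊗[R] B) :=
    (Q'.torIndependent_of_isZero_Tor htor).tensorProduct P
  let Q := projectiveResolution (ModuleCat.of R (P ⊗[R] B))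
  exact Q.isZero_Ext_succ_of_rTensor_syzygy_injective (Q.rTensor_syzygy_subtype_injective hPB n)
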